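/- arXiv:2207.02600 — 2 statements merged into one kernel-verified Lean document; each statement's English description precedes it below -/
import Mathlib

section
/- Let h : ℝ^d → ℝ^d satisfy the polynomial Lipschitz condition |h(θ) - h(θ')| ≤ L(1 + |θ| + |θ'|)^r |θ - θ'| with L > 0, r ≥ 0 integer, and in the case r > 0 also the convexity-at-infinity condition ⟨θ - θ', h(θ) - h(θ')⟩ ≥ a|θ - θ'|²(|θ|^r + |θ'|^r) - b|θ - θ'|²(|θ|^{r̄} + |θ'|^{r̄}) with a, b > 0, 0 ≤ r̄ < r. Then with R̄ := (b/a)^{1/(r-r̄)} (and R̄ := 0 when r = 0) and L̄ := L(1 + 2R̄)^r, the one-sided Lipschitz estimate ⟨θ - θ', h(θ) - h(θ')⟩ ≥ -L̄ |θ - θ'|² holds for all θ, θ' ∈ ℝ^d. -/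
open scoped RealInnerProductSpace

section auxOSL

-- two-point convexity of rpow for exponent ≥ 1
lemma osl_conv2 {c x y : ℝ} (hc : 1 ≤ c) (hx : 0 ≤ x) (hy : 0 ≤ y) :
    2 * ((x + y) / 2) ^ c ≤ x ^ c + y ^ c := by
  have h := (convexOn_rpow hc).2 (Set.mem_Ici.mpr hx) (Set.mem_Ici.mpr hy)
    (by norm_num : (0:ℝ) ≤ 1/2) (by norm_num : (0:ℝ) ≤ 1/2) (by norm_num)
  simp only [smul_eq_mul] at h
  have e : (1/2 : ℝ) * x + (1/2) * y = (x + y) / 2 := by ring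
  rw [e] at h
  linarith

-- two-point concavity of rpow for exponent in [0,1]
lemma osl_conc2 {q x y : ℝ} (hq0 : 0 ≤ q) (hq1 : q ≤ 1) (hx : 0 ≤ x) (hy : 0 ≤ y) :
    x ^ q + y ^ q ≤ 2 * ((x + y) / 2) ^ q := by
  have h := (Real.concaveOn_rpow hq0 hq1).2 (Set.mem_Ici.mpr hx) (Set.mem_Ici.mpr hy)
    (by norm_num : (0:ℝ) ≤ 1/2) (by norm_num : (0:ℝ) ≤ 1/2) (by norm_num)
  simp only [smul_eq_mul] at h
  have e : (1/2 : ℝ) * x + (1/2) * y = (x + y) / 2 := by ring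
  rw [e] at h
  linarith

lemma osl_psi1 {c x y : ℝ} (hc : 1 ≤ c) (hx : 0 ≤ x) (hy : 0 ≤ y) (hs : 2 ≤ x + y) :
    x + y ≤ x ^ c + y ^ c := by
  have hm : 1 ≤ (x + y) / 2 := by linarith
  have h1 : (x + y) / 2 ≤ ((x + y) / 2) ^ c := by
    nth_rewrite 1 [← Real.rpow_one ((x+y)/2)]
    exact Real.rpow_le_rpow_of_exponent_le hm hc
  have h2 := osl_conv2 hc hx hy
  linarith

lemma osl_key_aux {c q x y : ℝ} (h1q : 1 < q) (hqc : q ≤ c) (hy : 0 ≤ y) (hyx : y ≤ x)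
    (hs : 2 ≤ x + y) : x ^ q + y ^ q ≤ x ^ c + y ^ c := by
  have hx1 : 1 ≤ x := by linarith
  have hx0 : 0 ≤ x := by linarith
  rcases le_or_gt 1 y with hy1 | hy1
  · have := Real.rpow_le_rpow_of_exponent_le hx1 hqc
    have := Real.rpow_le_rpow_of_exponent_le hy1 hqc
    linarith
  rcases eq_or_lt_of_le hy with hy0 | hy0
  · rw [← hy0, Real.zero_rpow (by linarith : q ≠ 0), Real.zero_rpow (by nlinarith : c ≠ 0)]
    have := Real.rpow_le_rpow_of_exponent_le hx1 hqc
    linarith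
  · set t := c - q with ht
    have ht0 : 0 ≤ t := by linarith
    have ex : x ^ c = x ^ q * x ^ t := by
      rw [← Real.rpow_add (by linarith : (0:ℝ) < x)]; ring_nf; rw [ht]; ring_nf
    have ey : y ^ c = y ^ q * y ^ t := by
      rw [← Real.rpow_add hy0]; ring_nf; rw [ht]; ring_nf
    have hxt : 1 ≤ x ^ t := Real.one_le_rpow hx1 ht0
    have hyt : y ^ t ≤ 1 := Real.rpow_le_one hy hy1.le ht0
    have hxq : x ≤ x ^ q := by
      nth_rewrite 1 [← Real.rpow_one x]
      exact Real.rpow_le_rpow_of_exponent_le hx1 h1q.le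
    have hyq : y ^ q ≤ y := by
      nth_rewrite 2 [← Real.rpow_one y]
      exact Real.rpow_le_rpow_of_exponent_ge hy0 hy1.le h1q.le
    have hpsi : x + y ≤ x ^ (t + 1) + y ^ (t + 1) := osl_psi1 (by linarith) hx0 hy (by linarith)
    have ext : x ^ (t + 1) = x ^ t * x := by
      rw [Real.rpow_add (by linarith : (0:ℝ) < x), Real.rpow_one]
    have eyt : y ^ (t + 1) = y ^ t * y := by
      rw [Real.rpow_add hy0, Real.rpow_one]
    rw [ext, eyt] at hpsi
    have A : x * (x ^ t - 1) ≤ x ^ q * (x ^ t - 1) :=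
      mul_le_mul_of_nonneg_right hxq (by linarith)
    have B : y ^ q * (1 - y ^ t) ≤ y * (1 - y ^ t) :=
      mul_le_mul_of_nonneg_right hyq (by linarith)
    rw [ex, ey]
    nlinarith [A, B, hpsi]

lemma osl_key {c q x y : ℝ} (hc : 1 ≤ c) (hq0 : 0 ≤ q) (hqc : q ≤ c) (hx : 0 ≤ x) (hy : 0 ≤ y)
    (hs : 2 ≤ x + y) : x ^ q + y ^ q ≤ x ^ c + y ^ c := by
  rcases le_or_gt q 1 with hq1 | hq1
  · have hm : 1 ≤ (x + y) / 2 := by linarith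
    have h1 := osl_conc2 hq0 hq1 hx hy
    have h2 : ((x + y) / 2) ^ q ≤ ((x + y) / 2) ^ c :=
      Real.rpow_le_rpow_of_exponent_le hm hqc
    have h3 := osl_conv2 hc hx hy
    linarith
  · rcases le_total y x with hyx | hxy
    · exact osl_key_aux hq1 hqc hy hyx hs
    · have := osl_key_aux hq1 hqc hx hxy (by linarith)
      linarith

end auxOSL

theorem one_sided_lipschitz
    (d : ℕ) (hd : 1 ≤ d)
    (h : EuclideanSpace ℝ (Fin d) → EuclideanSpace ℝ (Fin d))
    (L a b rbar : ℝ) (r : ℕ)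
    (hL : 0 < L) (ha : 0 < a) (hb : 0 < b) (hrbar0 : 0 ≤ rbar)
    (hLip : ∀ θ θ' : EuclideanSpace ℝ (Fin d),
      ‖h θ - h θ'‖ ≤ L * (1 + ‖θ‖ + ‖θ'‖) ^ (r : ℝ) * ‖θ - θ'‖)
    (hconv : 0 < r → rbar < r ∧
      ∀ θ θ' : EuclideanSpace ℝ (Fin d),
        ⟪θ - θ', h θ - h θ'⟫ ≥
          a * ‖θ - θ'‖ ^ 2 * (‖θ‖ ^ (r : ℝ) + ‖θ'‖ ^ (r : ℝ))
            - b * ‖θ - θ'‖ ^ 2 * (‖θ‖ ^ rbar + ‖θ'‖ ^ rbar)) :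
    ∀ θ θ' : EuclideanSpace ℝ (Fin d),
      ⟪θ - θ', h θ - h θ'⟫ ≥
        -(L * (1 + 2 * (if r = 0 then 0 else (b / a) ^ (1 / ((r : ℝ) - rbar)))) ^ (r : ℝ))
          * ‖θ - θ'‖ ^ 2 := by
  intro θ θ'
  have hD : (0:ℝ) ≤ ‖θ - θ'‖ := norm_nonneg _
  have cauchy : -(‖θ - θ'‖ * ‖h θ - h θ'‖) ≤ ⟪θ - θ', h θ - h θ'⟫ := by
    have h1 := abs_real_inner_le_norm (θ - θ') (h θ - h θ')
    have h2 := neg_abs_le ⟪θ - θ', h θ - h θ'⟫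
    linarith
  by_cases hr : r = 0
  · subst hr
    simp only [if_pos rfl, Nat.cast_zero, Real.rpow_zero, mul_one]
    have h2 := hLip θ θ'
    simp only [Nat.cast_zero, Real.rpow_zero] at h2
    have h3 : ‖θ - θ'‖ * ‖h θ - h θ'‖ ≤ ‖θ - θ'‖ * (L * 1 * ‖θ - θ'‖) :=
      mul_le_mul_of_nonneg_left h2 hD
    nlinarith [cauchy, h3]
  · have hr1 : 0 < r := Nat.pos_of_ne_zero hr
    have hr1' : (1:ℝ) ≤ (r:ℝ) := by exact_mod_cast hr1
    obtain ⟨hlt, hc⟩ := hconv hr1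
    simp only [if_neg hr]
    set R : ℝ := (b / a) ^ (1 / ((r : ℝ) - rbar)) with hRdef
    have hrr : 0 < (r:ℝ) - rbar := by linarith
    have hRpos : 0 < R := Real.rpow_pos_of_pos (div_pos hb ha) _
    have hRe : R ^ ((r:ℝ) - rbar) = b / a := by
      rw [hRdef, ← Real.rpow_mul (div_pos hb ha).le, one_div,
        inv_mul_cancel₀ (ne_of_gt hrr), Real.rpow_one]
    rcases le_or_gt (‖θ‖ + ‖θ'‖) (2 * R) with hcase | hcase
    · -- Lipschitz regime
      have h1 : (1 + ‖θ‖ + ‖θ'‖) ^ (r:ℝ) ≤ (1 + 2 * R) ^ (r:ℝ) :=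
        Real.rpow_le_rpow (by positivity) (by linarith) (by positivity)
      have h2 := hLip θ θ'
      have h3 : ‖h θ - h θ'‖ ≤ L * (1 + 2 * R) ^ (r:ℝ) * ‖θ - θ'‖ := by
        refine h2.trans ?_
        have := mul_le_mul_of_nonneg_right (mul_le_mul_of_nonneg_left h1 hL.le) hD
        linarith
      have h4 : ‖θ - θ'‖ * ‖h θ - h θ'‖ ≤ ‖θ - θ'‖ * (L * (1 + 2 * R) ^ (r:ℝ) * ‖θ - θ'‖) :=
        mul_le_mul_of_nonneg_left h3 hD
      nlinarith [cauchy, h4]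
    · -- convexity regime
      have hx : (0:ℝ) ≤ ‖θ‖ := norm_nonneg _
      have hy : (0:ℝ) ≤ ‖θ'‖ := norm_nonneg _
      have hsum : 2 ≤ ‖θ‖ / R + ‖θ'‖ / R := by
        rw [← add_div, le_div_iff₀ hRpos]
        linarith
      have hk := osl_key (c := (r:ℝ)) (q := rbar) hr1' hrbar0 hlt.le
        (by positivity : (0:ℝ) ≤ ‖θ‖ / R) (by positivity : (0:ℝ) ≤ ‖θ'‖ / R) hsum
      have ediv : ∀ (z e : ℝ), 0 ≤ z → (z / R) ^ e = z ^ e / R ^ e := fun z e hz =>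
        Real.div_rpow hz hRpos.le e
      rw [ediv _ _ hx, ediv _ _ hy, ediv _ _ hx, ediv _ _ hy] at hk
      have hRr : (0:ℝ) < R ^ (r:ℝ) := Real.rpow_pos_of_pos hRpos _
      have hRrb : (0:ℝ) < R ^ rbar := Real.rpow_pos_of_pos hRpos _
      have hb' : b = a * R ^ ((r:ℝ) - rbar) := by
        rw [hRe]; field_simp
      have hRsplit : R ^ (r:ℝ) = R ^ ((r:ℝ) - rbar) * R ^ rbar := by
        rw [← Real.rpow_add hRpos]; ring_nf
      have h5 := mul_le_mul_of_nonneg_left hk (by positivity : (0:ℝ) ≤ a * R ^ (r:ℝ))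
      have h6 : a * R ^ (r:ℝ) * (‖θ‖ ^ rbar / R ^ rbar + ‖θ'‖ ^ rbar / R ^ rbar)
          = b * (‖θ‖ ^ rbar + ‖θ'‖ ^ rbar) := by
        rw [hb', hRsplit]; field_simp
      have h7 : a * R ^ (r:ℝ) * (‖θ‖ ^ (r:ℝ) / R ^ (r:ℝ) + ‖θ'‖ ^ (r:ℝ) / R ^ (r:ℝ))
          = a * (‖θ‖ ^ (r:ℝ) + ‖θ'‖ ^ (r:ℝ)) := by
        field_simp
      rw [h6, h7] at h5
      have h8 : 0 ≤ ‖θ - θ'‖ ^ 2 * (a * (‖θ‖ ^ (r:ℝ) + ‖θ'‖ ^ (r:ℝ))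
          - b * (‖θ‖ ^ rbar + ‖θ'‖ ^ rbar)) :=
        mul_nonneg (sq_nonneg _) (by linarith)
      have h9 : (0:ℝ) ≤ L * (1 + 2 * R) ^ (r:ℝ) * ‖θ - θ'‖ ^ 2 := by positivity
      have h10 := hc θ θ'
      nlinarith [h8, h9, h10]
end

section
/- Let h : ℝ^d → ℝ^d satisfy ⟨θ, h(θ)⟩ ≥ ā|θ|² - b̄' for all θ (with ā, b̄' > 0). Define the Lyapunov function V_p(θ) := (1 + |θ|²)^{p/2}. Then for every integer p ≥ 2 and all θ ∈ ℝ^d, β^{-1} Δ V_p(θ) - ⟨∇V_p(θ), h(θ)⟩ ≤ -(āp/2) V_p(θ) + (āp/2)(1 + M_V(p)²)^{p/2}, where M_V(p) := (1 + (2b̄' + 2β^{-1}(d + p - 2))/ā)^{1/2} and β > 0. -/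
/-!
With `s = 1 + |θ|²` and `A = s^((p-2)/2)`, the Laplacian term is at most `β⁻¹ p (d + p - 2) A`
(as `|θ|² ≤ s`) and dissipativity bounds the drift term by `p A (b̄' - ā|θ|²)`. Adding
`(āp/2) V_p = (āp/2) A s` turns the total into `(āp/2) A (c - s)` with `c = 1 + M_V(p)²`, and
`s^q (c - s) ≤ c^(q+1)` for every `s > 0`: compare `s` with `c`.
-/

open scoped RealInnerProductSpace

namespace Real

theorem one_add_rpow_sub_one_mul_le {r : ℝ} (hr : 0 ≤ r) (x : ℝ) :
    (1 + r) ^ (x - 1) * r ≤ (1 + r) ^ x := by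
  have hs : 0 < 1 + r := by linarith
  calc (1 + r) ^ (x - 1) * r ≤ (1 + r) ^ (x - 1) * (1 + r) := by gcongr; linarith
    _ = (1 + r) ^ x := by rw [← rpow_add_one hs.ne', sub_add_cancel]

theorem rpow_mul_sub_le_rpow_mul {s c q : ℝ} (hs : 0 < s) (hc : 0 ≤ c) (hq : 0 ≤ q) :
    s ^ q * (c - s) ≤ c ^ q * c := by
  rcases le_or_gt s c with hsc | hcs
  · calc s ^ q * (c - s) ≤ c ^ q * (c - s) := by gcongr
      _ ≤ c ^ q * c := by gcongr; linarith
  · calc s ^ q * (c - s) ≤ 0 := mul_nonpos_of_nonneg_of_nonpos (by positivity) (by linarith)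
      _ ≤ c ^ q * c := by positivity

end Real

theorem lyapunov_drift_condition_general
    (d : ℕ) (β abar bbar' : ℝ)
    (hβ : 0 < β) (habar : 0 < abar) (hbbar' : 0 < bbar')
    (h : EuclideanSpace ℝ (Fin d) → EuclideanSpace ℝ (Fin d))
    (hdiss : ∀ θ : EuclideanSpace ℝ (Fin d), ⟪θ, h θ⟫ ≥ abar * ‖θ‖ ^ 2 - bbar')
    (p : ℕ) (hp : 2 ≤ p) :
    ∀ θ : EuclideanSpace ℝ (Fin d),
      β⁻¹ * ((p : ℝ) * ((p : ℝ) - 2) * (1 + ‖θ‖ ^ 2) ^ ((p : ℝ) / 2 - 2) * ‖θ‖ ^ 2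
            + (d : ℝ) * (p : ℝ) * (1 + ‖θ‖ ^ 2) ^ (((p : ℝ) - 2) / 2))
          - ⟪((p : ℝ) * (1 + ‖θ‖ ^ 2) ^ (((p : ℝ) - 2) / 2)) • θ, h θ⟫
        ≤ -(abar * (p : ℝ) / 2) * (1 + ‖θ‖ ^ 2) ^ ((p : ℝ) / 2)
          + (abar * (p : ℝ) / 2)
              * (1 + (1 + (2 * bbar' + 2 * β⁻¹ * ((d : ℝ) + (p : ℝ) - 2)) / abar))
                  ^ ((p : ℝ) / 2) := by
  intro θ
  have hp' : (2 : ℝ) ≤ p := by exact_mod_cast hp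
  set s := 1 + ‖θ‖ ^ 2
  set c := 1 + (1 + (2 * bbar' + 2 * β⁻¹ * ((d : ℝ) + (p : ℝ) - 2)) / abar)
  set A := s ^ (((p : ℝ) - 2) / 2)
  have hs : 0 < s := by positivity
  have hc : 0 < c := by
    have : 0 ≤ (d : ℝ) + p - 2 := by linarith [d.cast_nonneg (α := ℝ)]
    positivity
  have hac : abar * c = 2 * abar + 2 * bbar' + 2 * β⁻¹ * ((d : ℝ) + p - 2) := by
    simp only [c]; field_simp; ring
  have hV : s ^ ((p : ℝ) / 2) = A * s := by
    rw [← Real.rpow_add_one hs.ne']; ring_nf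
  have hcV : c ^ ((p : ℝ) / 2) = c ^ (((p : ℝ) - 2) / 2) * c := by
    rw [← Real.rpow_add_one hc.ne']; ring_nf
  have hLap : s ^ ((p : ℝ) / 2 - 2) * ‖θ‖ ^ 2 ≤ A := by
    simpa only [show (p : ℝ) / 2 - 2 = ((p : ℝ) - 2) / 2 - 1 by ring]
      using Real.one_add_rpow_sub_one_mul_le (sq_nonneg ‖θ‖) _
  have hdrift : A * (c - s) ≤ c ^ (((p : ℝ) - 2) / 2) * c :=
    Real.rpow_mul_sub_le_rpow_mul hs hc.le (by linarith)
  have h1 := mul_le_mul_of_nonneg_left hLap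
    (by have := hβ.le; positivity : 0 ≤ β⁻¹ * ((p : ℝ) * ((p : ℝ) - 2)))
  have h2 := mul_le_mul_of_nonneg_left (hdiss θ) (by positivity : 0 ≤ (p : ℝ) * A)
  have h3 := mul_le_mul_of_nonneg_left hdrift (by positivity : 0 ≤ abar * (p : ℝ) / 2)
  rw [real_inner_smul_left, hV, hcV]
  clear_value c
  linear_combination h1 + h2 + h3 - ((p : ℝ) * A / 2) * hac

theorem lyapunov_drift_condition
    (d : ℕ) (hd : 1 ≤ d) (β abar bbar' : ℝ)
    (hβ : 0 < β) (habar : 0 < abar) (hbbar' : 0 < bbar')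
    (h : EuclideanSpace ℝ (Fin d) → EuclideanSpace ℝ (Fin d))
    (hdiss : ∀ θ : EuclideanSpace ℝ (Fin d), ⟪θ, h θ⟫ ≥ abar * ‖θ‖ ^ 2 - bbar')
    (p : ℕ) (hp : 2 ≤ p) :
    ∀ θ : EuclideanSpace ℝ (Fin d),
      β⁻¹ * ((p : ℝ) * ((p : ℝ) - 2) * (1 + ‖θ‖ ^ 2) ^ ((p : ℝ) / 2 - 2) * ‖θ‖ ^ 2
            + (d : ℝ) * (p : ℝ) * (1 + ‖θ‖ ^ 2) ^ (((p : ℝ) - 2) / 2))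
          - ⟪((p : ℝ) * (1 + ‖θ‖ ^ 2) ^ (((p : ℝ) - 2) / 2)) • θ, h θ⟫
        ≤ -(abar * (p : ℝ) / 2) * (1 + ‖θ‖ ^ 2) ^ ((p : ℝ) / 2)
          + (abar * (p : ℝ) / 2)
              * (1 + (1 + (2 * bbar' + 2 * β⁻¹ * ((d : ℝ) + (p : ℝ) - 2)) / abar))
                  ^ ((p : ℝ) / 2) :=
  lyapunov_drift_condition_general d β abar bbar' hβ habar hbbar' h hdiss p hp
end
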